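/- (Proposition 2) For every horizon m ≥ 0, every μ ∈ ℝ and all ñ with 0 < ñ < n: if V_m(μ,n,γ,τ,λ) > 0 then V_m(μ,ñ,γ,τ,λ) > 0. -/

import Mathlib

/-!
By induction on the horizon, each `V_m(·, n)` is convex and Lipschitz in `μ`, and `V_{m+1}(μ, n)`
averages `V_m(·, n + τ)` over the next posterior mean, which is Gaussian around `μ` with variance
`τ / (n (n + τ))`. Lowering `n` raises `V_m(·, n + τ)` pointwise (induction hypothesis) and raises
that variance, which by convexity raises the Gaussian average. So `V_m(μ, n)` is antitone in `n`.
-/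

open MeasureTheory ProbabilityTheory Set
open scoped NNReal

/-- Finite-horizon value function of the Gaussian one-armed bandit:
`V γ τ m μ n λ`, with discount `γ`, observation precision `τ`, horizon `m`,
posterior state `(μ, n)` and safe-arm reward `λ`. The expectation over the
next observation is taken under the Gaussian predictive distribution
`𝒩(μ, 1/n + 1/τ)`. -/
noncomputable def V (γ τ : ℝ) : ℕ → ℝ → ℝ → ℝ → ℝ
  | 0, μ, _n, lam => max (μ - lam) 0 / (1 - γ)
  | m + 1, μ, n, lam =>
      max (μ - lam + γ * ∫ y, V γ τ m ((n * μ + τ * y) / (n + τ)) (n + τ) lam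
        ∂(gaussianReal μ (1 / n + 1 / τ).toNNReal)) 0

lemma LipschitzWith.integrable {ν : Measure ℝ} [IsFiniteMeasure ν] (hid : Integrable id ν)
    {f : ℝ → ℝ} {L : ℝ≥0} (hf : LipschitzWith L f) : Integrable f ν := by
  refine ((integrable_const |f 0|).add (hid.norm.const_mul L)).mono'
    hf.continuous.aestronglyMeasurable (ae_of_all _ fun x => ?_)
  have := hf.dist_le_mul x 0
  simp only [Real.dist_eq, sub_zero] at this
  simp only [Pi.add_apply, Real.norm_eq_abs, id]
  linarith [abs_sub_abs_le_abs_sub (f x) (f 0)]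

lemma LipschitzWith.integral_comp_add {ν : Measure ℝ} [IsProbabilityMeasure ν]
    (hid : Integrable id ν) {f : ℝ → ℝ} {L : ℝ≥0} (hf : LipschitzWith L f) :
    LipschitzWith L fun μ => ∫ z, f (μ + z) ∂ν := by
  have hint (μ : ℝ) : Integrable (fun z => f (μ + z)) ν :=
    (hf.comp (isometry_add_left μ).lipschitz).integrable hid
  refine LipschitzWith.of_dist_le_mul fun a b => ?_
  rw [dist_eq_norm, ← integral_sub (hint a) (hint b)]
  calc ‖∫ z, f (a + z) - f (b + z) ∂ν‖ ≤ L * dist a b * ν.real univ :=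
        norm_integral_le_of_norm_le_const (ae_of_all _ fun z => by
          simpa [← dist_eq_norm] using hf.dist_le_mul (a + z) (b + z))
    _ = L * dist a b := by simp

lemma ConvexOn.integral_comp_add {ν : Measure ℝ} {f : ℝ → ℝ} (hf : ConvexOn ℝ univ f)
    (hint : ∀ μ, Integrable (fun z => f (μ + z)) ν) :
    ConvexOn ℝ univ fun μ => ∫ z, f (μ + z) ∂ν := by
  refine ⟨convex_univ, fun x _ y _ a b ha hb hab => ?_⟩
  have hpt (z : ℝ) : f (a * x + b * y + z) ≤ a * f (x + z) + b * f (y + z) := by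
    have e : a * (x + z) + b * (y + z) = a * x + b * y + z := by linear_combination z * hab
    simpa only [smul_eq_mul, e] using hf.2 (mem_univ (x + z)) (mem_univ (y + z)) ha hb hab
  calc ∫ z, f (a • x + b • y + z) ∂ν ≤ ∫ z, a * f (x + z) + b * f (y + z) ∂ν :=
        integral_mono (hint _) (((hint x).const_mul a).add ((hint y).const_mul b)) hpt
    _ = a • ∫ z, f (x + z) ∂ν + b • ∫ z, f (y + z) ∂ν := by
        rw [integral_add ((hint x).const_mul a) ((hint y).const_mul b), integral_const_mul,
          integral_const_mul, smul_eq_mul, smul_eq_mul]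

lemma integrable_id_gaussianReal (μ : ℝ) (v : ℝ≥0) : Integrable id (gaussianReal μ v) :=
  (memLp_id_gaussianReal 1).integrable le_rfl

lemma LipschitzWith.integrable_gaussianReal {f : ℝ → ℝ} {L : ℝ≥0} (hf : LipschitzWith L f)
    (μ : ℝ) (v : ℝ≥0) : Integrable f (gaussianReal μ v) :=
  hf.integrable (integrable_id_gaussianReal μ v)

/-- Centered Gaussians increase in the convex order with their variance: writing `r = √(v₁/v₂)`,
`r • X` is a convex combination of `X` and `-X`, which have the same law. -/
lemma ConvexOn.integral_gaussianReal_mono {f : ℝ → ℝ} (hf : ConvexOn ℝ univ f)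
    {v₁ v₂ : ℝ≥0} (hv : v₁ ≤ v₂) (hf₁ : Integrable f (gaussianReal 0 v₁))
    (hf₂ : Integrable f (gaussianReal 0 v₂)) :
    ∫ x, f x ∂gaussianReal 0 v₁ ≤ ∫ x, f x ∂gaussianReal 0 v₂ := by
  rcases eq_or_ne v₂ 0 with rfl | hv₂
  · rw [nonpos_iff_eq_zero.mp hv]
  set r := √(v₁ / v₂ : ℝ)
  have hr₀ : 0 ≤ r := Real.sqrt_nonneg _
  have hr₁ : r ≤ 1 := Real.sqrt_le_one.mpr (div_le_one_of_le₀ (by exact_mod_cast hv) v₂.2)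
  have hmap : (gaussianReal 0 v₂).map (r * ·) = gaussianReal 0 v₁ := by
    rw [gaussianReal_map_const_mul, mul_zero]
    congr 1
    ext
    simp only [NNReal.coe_mul, NNReal.coe_mk, r]
    rw [Real.sq_sqrt (by positivity), div_mul_cancel₀ _ (NNReal.coe_ne_zero.mpr hv₂)]
  have hneg : (gaussianReal 0 v₂).map (- ·) = gaussianReal 0 v₂ := by
    rw [gaussianReal_map_neg, neg_zero]
  have hf_meas (ν : Measure ℝ) : AEStronglyMeasurable f ν :=
    (continuousOn_univ.mp (hf.continuousOn isOpen_univ)).aestronglyMeasurable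
  have hf_r : Integrable (fun x => f (r * x)) (gaussianReal 0 v₂) :=
    (integrable_map_measure (hf_meas _) (by fun_prop)).1 (by rwa [hmap])
  have hf_neg : Integrable (fun x => f (-x)) (gaussianReal 0 v₂) :=
    (integrable_map_measure (hf_meas _) (by fun_prop)).1 (by rwa [hneg])
  have hcomb (x : ℝ) : f (r * x) ≤ (1 + r) / 2 * f x + (1 - r) / 2 * f (-x) := by
    have e : (1 + r) / 2 * x + (1 - r) / 2 * -x = r * x := by ring
    simpa only [smul_eq_mul, e] using
      hf.2 (mem_univ x) (mem_univ (-x)) (show 0 ≤ (1 + r) / 2 by linarith)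
        (show 0 ≤ (1 - r) / 2 by linarith) (by ring)
  have hrefl : ∫ x, f (-x) ∂gaussianReal 0 v₂ = ∫ x, f x ∂gaussianReal 0 v₂ := by
    conv_rhs => rw [← hneg, integral_map (by fun_prop) (hf_meas _)]
  calc ∫ x, f x ∂gaussianReal 0 v₁ = ∫ x, f (r * x) ∂gaussianReal 0 v₂ := by
        rw [← hmap, integral_map (by fun_prop) (hf_meas _)]
    _ ≤ ∫ x, (1 + r) / 2 * f x + (1 - r) / 2 * f (-x) ∂gaussianReal 0 v₂ :=
        integral_mono hf_r ((hf₂.const_mul _).add (hf_neg.const_mul _)) hcomb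
    _ = ∫ x, f x ∂gaussianReal 0 v₂ := by
        rw [integral_add (hf₂.const_mul _) (hf_neg.const_mul _), integral_const_mul,
          integral_const_mul, hrefl]
        ring

/-- The variance `(τ / (n + τ))² (1/n + 1/τ)` of the next posterior mean `(n μ + τ y) / (n + τ)`
when `y` follows the predictive law `𝒩(μ, 1/n + 1/τ)`. -/
noncomputable def posteriorMeanVar (τ n : ℝ) : ℝ≥0 := (τ / (n * (n + τ))).toNNReal

lemma posteriorMeanVar_antitoneOn {τ : ℝ} (hτ : 0 < τ) : AntitoneOn (posteriorMeanVar τ) (Ioi 0) :=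
  fun a (ha : 0 < a) _ _ hab => Real.toNNReal_le_toNNReal <|
    div_le_div_of_nonneg_left hτ.le (by positivity) (by nlinarith)

lemma gaussianReal_map_posteriorMean {τ n : ℝ} (hτ : 0 < τ) (hn : 0 < n) (μ : ℝ) :
    (gaussianReal μ (1 / n + 1 / τ).toNNReal).map (fun y => τ / (n + τ) * (y - μ))
      = gaussianReal 0 (posteriorMeanVar τ n) := by
  rw [show (fun y => τ / (n + τ) * (y - μ)) = (τ / (n + τ) * ·) ∘ (· - μ) from rfl,
    ← Measure.map_map (by fun_prop) (by fun_prop), gaussianReal_map_sub_const, sub_self,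
    gaussianReal_map_const_mul, mul_zero]
  congr 1
  ext
  simp only [NNReal.coe_mul, NNReal.coe_mk, posteriorMeanVar]
  rw [Real.coe_toNNReal _ (by positivity), Real.coe_toNNReal _ (by positivity)]
  field_simp
  ring

variable {γ τ lam : ℝ}

lemma V_zero (μ n : ℝ) : V γ τ 0 μ n lam = (1 - γ)⁻¹ * max (μ - lam) 0 :=
  div_eq_inv_mul _ _

lemma V_succ_eq (hτ : 0 < τ) (m : ℕ) {n : ℝ} (hn : 0 < n) (μ : ℝ) :
    V γ τ (m + 1) μ n lam = max (μ - lam + γ *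
      ∫ z, V γ τ m (μ + z) (n + τ) lam ∂gaussianReal 0 (posteriorMeanVar τ n)) 0 := by
  have hemb : MeasurableEmbedding fun y => τ / (n + τ) * (y - μ) :=
    (measurableEmbedding_mulLeft₀ (by positivity)).comp (measurableEmbedding_subRight μ)
  rw [V, ← gaussianReal_map_posteriorMean hτ hn, hemb.integral_map]
  congr 4 with y
  congr 1
  field_simp
  ring

lemma exists_lipschitzWith_V (hτ : 0 < τ) (m : ℕ) {n : ℝ} (hn : 0 < n) :
    ∃ L, LipschitzWith L fun μ => V γ τ m μ n lam := by
  induction m generalizing n with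
  | zero =>
    simp only [V_zero]
    exact ⟨_, (lipschitzWith_smul (1 - γ)⁻¹).comp
      ((LipschitzWith.id.sub (LipschitzWith.const lam)).max_const 0)⟩
  | succ m ih =>
    obtain ⟨L, hL⟩ := ih (n := n + τ) (by positivity)
    have hK := hL.integral_comp_add (integrable_id_gaussianReal 0 (posteriorMeanVar τ n))
    rw [funext (V_succ_eq hτ m hn)]
    exact ⟨_, ((LipschitzWith.id.sub (LipschitzWith.const lam)).add
      ((lipschitzWith_smul γ).comp hK)).max_const 0⟩

lemma convexOn_V (hγ₀ : 0 ≤ γ) (hγ₁ : γ < 1) (hτ : 0 < τ) (m : ℕ) {n : ℝ} (hn : 0 < n) :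
    ConvexOn ℝ univ fun μ => V γ τ m μ n lam := by
  have hsub : ConvexOn ℝ univ fun μ : ℝ => μ - lam :=
    (convexOn_id convex_univ).sub (concaveOn_const lam convex_univ)
  induction m generalizing n with
  | zero =>
    simp only [V_zero]
    exact (hsub.sup (convexOn_const 0 convex_univ)).smul (inv_nonneg.mpr (sub_nonneg.mpr hγ₁.le))
  | succ m ih =>
    obtain ⟨L, hL⟩ := exists_lipschitzWith_V (γ := γ) (lam := lam) hτ m (n := n + τ) (by positivity)
    have hK := (ih (n := n + τ) (by positivity)).integral_comp_add fun μ =>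
      (hL.comp (isometry_add_left μ).lipschitz).integrable_gaussianReal 0 (posteriorMeanVar τ n)
    rw [funext (V_succ_eq hτ m hn)]
    exact (hsub.add (hK.smul hγ₀)).sup (convexOn_const 0 convex_univ)

lemma V_antitoneOn (hγ₀ : 0 ≤ γ) (hγ₁ : γ < 1) (hτ : 0 < τ) (m : ℕ) (μ : ℝ) :
    AntitoneOn (fun n => V γ τ m μ n lam) (Ioi 0) := by
  induction m generalizing μ with
  | zero => exact fun _ _ _ _ _ => le_rfl
  | succ m ih =>
    rintro nt (hnt : 0 < nt) n (hn : 0 < n) hle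
    obtain ⟨L, hL⟩ := exists_lipschitzWith_V (γ := γ) (lam := lam) hτ m (n := n + τ) (by positivity)
    obtain ⟨L', hL'⟩ := exists_lipschitzWith_V (γ := γ) (lam := lam) hτ m (n := nt + τ) (by positivity)
    have hint {k : ℝ} {K : ℝ≥0} (hK : LipschitzWith K fun x => V γ τ m x k lam) (v : ℝ≥0) :
        Integrable (fun z => V γ τ m (μ + z) k lam) (gaussianReal 0 v) :=
      (hK.comp (isometry_add_left μ).lipschitz).integrable_gaussianReal 0 v
    simp only [V_succ_eq hτ m hn, V_succ_eq hτ m hnt]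
    gcongr
    calc ∫ z, V γ τ m (μ + z) (n + τ) lam ∂gaussianReal 0 (posteriorMeanVar τ n)
        ≤ ∫ z, V γ τ m (μ + z) (nt + τ) lam ∂gaussianReal 0 (posteriorMeanVar τ n) :=
          integral_mono (hint hL _) (hint hL' _) fun z =>
            ih (μ + z) (show 0 < nt + τ by positivity) (show 0 < n + τ by positivity) (by linarith)
      _ ≤ ∫ z, V γ τ m (μ + z) (nt + τ) lam ∂gaussianReal 0 (posteriorMeanVar τ nt) :=
          ((convexOn_V hγ₀ hγ₁ hτ m (by positivity)).translate_right μ).integral_gaussianReal_mono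
            (posteriorMeanVar_antitoneOn hτ hnt hn hle) (hint hL' _) (hint hL' _)

/-- Proposition 2: for every horizon `m`, every `μ` and all `0 < ñ < n`,
if `V_m(μ,n,γ,τ,λ) > 0` then `V_m(μ,ñ,γ,τ,λ) > 0`. -/
theorem nmab_continue_below_n (γ τ lam : ℝ)
    (hγ0 : 0 ≤ γ) (hγ1 : γ < 1) (hτ : 0 < τ) :
    ∀ m : ℕ, ∀ μ nt n : ℝ, 0 < nt → nt < n →
      0 < V γ τ m μ n lam → 0 < V γ τ m μ nt lam :=
  fun m μ _ _ hnt hlt hpos =>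
    hpos.trans_le (V_antitoneOn hγ0 hγ1 hτ m μ hnt (hnt.trans hlt) hlt.le)
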